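/- Let D be the set of the first k ≥ 0 moves of a connected domination game on G, and let v, v' be two legal next moves such that N[v] ∩ (V(G)∖N[D]) ⊆ N[v'] ∩ (V(G)∖N[D]). Then γ_cg((D∪{v'})→G) ≤ γ_cg((D∪{v})→G) and γ_cg'((D∪{v'})→G) ≤ γ_cg'((D∪{v})→G). -/

import Mathlib

open Finset

namespace ConnDomGame

variable {V : Type*} [Fintype V] [DecidableEq V]

/-- The closed neighborhood of a finite set of vertices. -/
def nbhd (G : SimpleGraph V) [DecidableRel G.Adj] (D : Finset V) : Finset V :=
  univ.filter fun u => u ∈ D ∨ ∃ v ∈ D, G.Adj u v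

/-- The legal moves in the connected domination game on `G` with predominated set `S`,
from the position where the set of played vertices is `D`: a legal move must dominate
a not-yet-dominated vertex and (except for the first move) be adjacent to a played vertex. -/
def legalMoves (G : SimpleGraph V) [DecidableRel G.Adj] (S D : Finset V) : Finset V :=
  univ.filter fun v =>
    ¬ (nbhd G {v} ⊆ S ∪ nbhd G D) ∧ (D = ∅ ∨ ∃ u ∈ D, G.Adj v u)

/-- Optimal number of further moves in the connected domination game on `G` with
predominated set `S`, from the position with played set `D`; `turn = true` means
Dominator (the minimizer) is to move.  The value is `⊤` if the player to move can
force the game to get stuck with an undominated vertex remaining.  The fuel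
argument `n` is sufficient whenever `n + D.card ≥ Fintype.card V`. -/
noncomputable def val (G : SimpleGraph V) [DecidableRel G.Adj] (S : Finset V) :
    Bool → ℕ → Finset V → ℕ∞
  | _, 0, D => if univ ⊆ S ∪ nbhd G D then 0 else ⊤
  | turn, n + 1, D =>
    if h : (legalMoves G S D).Nonempty then
      if turn then
        1 + (legalMoves G S D).inf' h fun v => val G S false n (insert v D)
      else
        1 + (legalMoves G S D).sup' h fun v => val G S true n (insert v D)
    else if univ ⊆ S ∪ nbhd G D then 0 else ⊤

/-- The Dominator-start game connected domination number of `G` with the vertices of `S`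
predominated (`γ_cg(G|S)`; for `S = ∅` this is `γ_cg(G)`). -/
noncomputable def gammaCG (G : SimpleGraph V) [DecidableRel G.Adj] (S : Finset V) : ℕ∞ :=
  val G S true (Fintype.card V) ∅

/-- The Staller-start game connected domination number of `G` with `S` predominated. -/
noncomputable def gammaCG' (G : SimpleGraph V) [DecidableRel G.Adj] (S : Finset V) : ℕ∞ :=
  val G S false (Fintype.card V) ∅

/-- The connected domination number of `G` with the set `S` predominated:
minimum size of a set `D` inducing a connected subgraph and dominating all
vertices outside `S`. -/
noncomputable def gammaC (G : SimpleGraph V) (S : Finset V) : ℕ :=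
  sInf {k | ∃ D : Finset V, D.card = k ∧ (G.induce (D : Set V)).Connected ∧
    ∀ u, u ∈ S ∨ u ∈ D ∨ ∃ v ∈ D, G.Adj u v}

/-- `l` is a legal sequence of first moves of the connected domination game on `G`
with predominated set `S`. -/
def LegalSeq (G : SimpleGraph V) [DecidableRel G.Adj] (S : Finset V) (l : List V) : Prop :=
  ∀ i (h : i < l.length), l.get ⟨i, h⟩ ∈ legalMoves G S (l.take i).toFinset

end ConnDomGame

namespace ConnDomGame

variable {V : Type*} [Fintype V] [DecidableEq V]

variable (G : SimpleGraph V) [DecidableRel G.Adj]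

lemma mem_nbhd {D : Finset V} {u : V} : u ∈ nbhd G D ↔ u ∈ D ∨ ∃ v ∈ D, G.Adj u v := by
  simp [nbhd]

lemma nbhd_mono {C D : Finset V} (h : C ⊆ D) : nbhd G C ⊆ nbhd G D := by
  intro u hu
  rw [mem_nbhd] at hu ⊢
  rcases hu with h1 | ⟨w, hw, ha⟩
  · exact Or.inl (h h1)
  · exact Or.inr ⟨w, h hw, ha⟩

lemma nbhd_insert (a : V) (D : Finset V) :
    nbhd G (insert a D) = nbhd G {a} ∪ nbhd G D := by
  ext u
  rw [mem_union, mem_nbhd, mem_nbhd, mem_nbhd]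
  constructor
  · rintro (h | ⟨v, hv, ha⟩)
    · rcases mem_insert.1 h with rfl | h
      · exact Or.inl (Or.inl (mem_singleton_self u))
      · exact Or.inr (Or.inl h)
    · rcases mem_insert.1 hv with rfl | hv
      · exact Or.inl (Or.inr ⟨v, mem_singleton_self v, ha⟩)
      · exact Or.inr (Or.inr ⟨v, hv, ha⟩)
  · rintro ((h | ⟨v, hv, ha⟩) | (h | ⟨v, hv, ha⟩))
    · exact Or.inl (mem_insert.2 (Or.inl (mem_singleton.1 h)))
    · exact Or.inr ⟨v, mem_insert.2 (Or.inl (mem_singleton.1 hv)), ha⟩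
    · exact Or.inl (mem_insert.2 (Or.inr h))
    · exact Or.inr ⟨v, mem_insert.2 (Or.inr hv), ha⟩

lemma mem_nbhd_singleton {a u : V} : u ∈ nbhd G {a} ↔ u = a ∨ G.Adj u a := by
  simp [mem_nbhd]

lemma adj_of_mem_nbhd {C : Finset V} {u : V} (h : u ∈ nbhd G C) (h2 : u ∉ C) :
    ∃ c ∈ C, G.Adj u c := by
  rw [mem_nbhd] at h
  exact h.resolve_left h2

lemma mem_legal {D : Finset V} {w : V} :
    w ∈ legalMoves G ∅ D ↔
      ¬ nbhd G {w} ⊆ nbhd G D ∧ (D = ∅ ∨ ∃ u ∈ D, G.Adj w u) := by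
  simp [legalMoves]

/-- The simulation invariant. -/
def Inv (C1 C2 : Finset V) : Prop :=
  C1.Nonempty ∧ C2.Nonempty ∧ nbhd G C2 ⊆ nbhd G C1 ∧
    ∀ X' ⊆ C1 \ C2, X'.Nonempty → ∃ x ∈ X', ∃ c ∈ C2 ∪ ((C1 \ C2) \ X'), G.Adj x c

lemma inv_mirror {C1 C2 : Finset V} (h : Inv G C1 C2) {u : V}
    (hu1 : u ∉ C1) (hu2 : u ∉ C2) : Inv G (insert u C1) (insert u C2) := by
  obtain ⟨h1, h2, hN, hGc⟩ := h
  have hX : insert u C1 \ insert u C2 = C1 \ C2 := by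
    ext y
    by_cases hy : y = u <;> simp [hy, hu1, hu2]
  refine ⟨insert_nonempty u C1, insert_nonempty u C2, ?_, ?_⟩
  · rw [nbhd_insert, nbhd_insert]
    exact union_subset_union (Finset.Subset.refl _) hN
  · intro X' hsub hne
    rw [hX] at hsub
    obtain ⟨x, hx, c, hc, hadj⟩ := hGc X' hsub hne
    refine ⟨x, hx, c, ?_, hadj⟩
    rw [hX]
    rcases mem_union.1 hc with h | h
    · exact mem_union_left _ (mem_insert_of_mem h)
    · exact mem_union_right _ h

lemma step_M2 {C1 C2 : Finset V} (h : Inv G C1 C2) {w : V}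
    (hw : w ∈ legalMoves G ∅ C1) :
    ∃ s ∈ legalMoves G ∅ C2, Inv G (insert w C1) (insert s C2) := by
  classical
  obtain ⟨h1, h2, hN, hGc⟩ := h
  rw [mem_legal] at hw
  obtain ⟨hnov, hadj⟩ := hw
  obtain ⟨z, hz1, hz2⟩ := Finset.not_subset.1 hnov
  have hzC2 : z ∉ nbhd G C2 := fun hz => hz2 (hN hz)
  have hwC1 : w ∉ C1 := fun hmem =>
    hz2 (nbhd_mono G (Finset.singleton_subset_iff.2 hmem) hz1)
  have hwC2 : w ∉ C2 := fun hmem =>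
    hzC2 (nbhd_mono G (Finset.singleton_subset_iff.2 hmem) hz1)
  obtain ⟨c, hc, hadjwc⟩ := hadj.resolve_left (Finset.nonempty_iff_ne_empty.1 h1)
  have hlegw : (∃ u ∈ C2, G.Adj w u) → w ∈ legalMoves G ∅ C2 := fun ha =>
    (mem_legal G).2 ⟨fun hss => hzC2 (hss hz1), Or.inr ha⟩
  by_cases hcC2 : c ∈ C2
  · exact ⟨w, hlegw ⟨c, hcC2, hadjwc⟩, inv_mirror G ⟨h1, h2, hN, hGc⟩ hwC1 hwC2⟩
  · have hcX : c ∈ C1 \ C2 := mem_sdiff.2 ⟨hc, hcC2⟩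
    have hwmem : ∀ x : V, G.Adj w x → w ∈ nbhd G {x} := fun x hx =>
      (mem_nbhd_singleton G).2 (Or.inr hx)
    by_cases hall : ∀ x ∈ C1 \ C2, nbhd G {x} ⊆ nbhd G C2
    · have hwn : w ∈ nbhd G C2 := hall c hcX (hwmem c hadjwc)
      obtain ⟨c2, hc2, hadj2⟩ := adj_of_mem_nbhd G hwn hwC2
      exact ⟨w, hlegw ⟨c2, hc2, hadj2⟩, inv_mirror G ⟨h1, h2, hN, hGc⟩ hwC1 hwC2⟩
    · push_neg at hall
      set Xn : Finset V := (C1 \ C2).filter (fun x => ¬ nbhd G {x} ⊆ nbhd G C2) with hXndef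
      have hXnne : Xn.Nonempty := by
        obtain ⟨x, hx, hnx⟩ := hall
        exact ⟨x, mem_filter.2 ⟨hx, hnx⟩⟩
      obtain ⟨x, hxXn, c', hc', hadjx⟩ := hGc Xn (filter_subset _ _) hXnne
      obtain ⟨hxX, hxnov⟩ := mem_filter.1 hxXn
      obtain ⟨zx, hzx1, hzx2⟩ := Finset.not_subset.1 hxnov
      have hxC1 : x ∈ C1 := (mem_sdiff.1 hxX).1
      have hxC2 : x ∉ C2 := (mem_sdiff.1 hxX).2
      have hxadj : ∃ u ∈ C2, G.Adj x u := by
        rcases mem_union.1 hc' with hcc | hcc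
        · exact ⟨c', hcc, hadjx⟩
        · obtain ⟨hcc1, hcc2⟩ := mem_sdiff.1 hcc
          have hsub' : nbhd G {c'} ⊆ nbhd G C2 := by
            by_contra hcon
            exact hcc2 (mem_filter.2 ⟨hcc1, hcon⟩)
          have : x ∈ nbhd G C2 := hsub' ((mem_nbhd_singleton G).2 (Or.inr hadjx))
          exact adj_of_mem_nbhd G this hxC2
      have hxlegal : x ∈ legalMoves G ∅ C2 :=
        (mem_legal G).2 ⟨fun hss => hzx2 (hss hzx1), Or.inr hxadj⟩
      refine ⟨x, hxlegal, ?_, ?_, ?_, ?_⟩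
      · exact insert_nonempty w C1
      · exact insert_nonempty x C2
      · rw [nbhd_insert, nbhd_insert]
        intro y hy
        rcases mem_union.1 hy with hy | hy
        · exact mem_union_right _
            (nbhd_mono G (Finset.singleton_subset_iff.2 hxC1) hy)
        · exact mem_union_right _ (hN hy)
      · -- the chain condition
        have hwx : w ≠ x := fun he => hwC1 (he ▸ hxC1)
        have hnewX : ∀ y, y ∈ insert w C1 \ insert x C2 ↔
            (y = w ∨ (y ∈ C1 \ C2 ∧ y ≠ x)) := by
          intro y
          constructor
          · intro hy
            obtain ⟨hy1, hy2⟩ := mem_sdiff.1 hy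
            rcases mem_insert.1 hy1 with rfl | hy1
            · exact Or.inl rfl
            · exact Or.inr ⟨mem_sdiff.2 ⟨hy1, fun hc => hy2 (mem_insert_of_mem hc)⟩,
                fun he => hy2 (he ▸ mem_insert_self x C2)⟩
          · rintro (rfl | ⟨hy1, hy2⟩)
            · refine mem_sdiff.2 ⟨mem_insert_self _ _, fun hc => ?_⟩
              rcases mem_insert.1 hc with he | hc
              · exact hwx he
              · exact hwC2 hc
            · obtain ⟨hy3, hy4⟩ := mem_sdiff.1 hy1
              refine mem_sdiff.2 ⟨mem_insert_of_mem hy3, fun hc => ?_⟩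
              rcases mem_insert.1 hc with he | hc
              · exact hy2 he
              · exact hy4 hc

        intro X' hsubX hX'ne
        by_cases hsing : ∀ y ∈ X', y = w
        · obtain ⟨y0, hy0⟩ := hX'ne
          have hwX' : w ∈ X' := (hsing y0 hy0) ▸ hy0
          refine ⟨w, hwX', c, ?_, hadjwc⟩
          by_cases hcx : c = x
          · exact mem_union_left _ (hcx ▸ mem_insert_self x C2)
          · refine mem_union_right _ (mem_sdiff.2 ⟨(hnewX c).2 (Or.inr ⟨hcX, hcx⟩), ?_⟩)
            intro hcX'
            exact hwC1 ((hsing c hcX') ▸ hc)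
        · push_neg at hsing
          obtain ⟨y0, hy0X, hy0w⟩ := hsing
          have hXsub : X'.erase w ⊆ C1 \ C2 := by
            intro y hy
            obtain ⟨hyw, hyX⟩ := mem_erase.1 hy
            rcases (hnewX y).1 (hsubX hyX) with h | h
            · exact absurd h hyw
            · exact h.1
          have hXne : (X'.erase w).Nonempty := ⟨y0, mem_erase.2 ⟨hy0w, hy0X⟩⟩
          obtain ⟨x0, hx0, c'', hc'', hadj''⟩ := hGc (X'.erase w) hXsub hXne
          refine ⟨x0, erase_subset _ _ hx0, c'', ?_, hadj''⟩
          rcases mem_union.1 hc'' with h | h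
          · exact mem_union_left _ (mem_insert_of_mem h)
          · obtain ⟨hcc1, hcc2⟩ := mem_sdiff.1 h
            by_cases hcx : c'' = x
            · exact mem_union_left _ (hcx ▸ mem_insert_self x C2)
            · refine mem_union_right _ (mem_sdiff.2 ⟨(hnewX c'').2 (Or.inr ⟨hcc1, hcx⟩), ?_⟩)
              intro hcX'
              have hcw : c'' ≠ w := fun he => hwC1 (he ▸ (mem_sdiff.1 hcc1).1)
              exact hcc2 (mem_erase.2 ⟨hcw, hcX'⟩)

lemma step_M1 {C1 C2 : Finset V} (h : Inv G C1 C2) {u : V}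
    (hu : u ∈ legalMoves G ∅ C2) (ht : (legalMoves G ∅ C1).Nonempty) :
    ∃ s ∈ legalMoves G ∅ C1, Inv G (insert s C1) (insert u C2) := by
  classical
  obtain ⟨h1, h2, hN, hGc⟩ := h
  rw [mem_legal] at hu
  obtain ⟨hnov, hadj⟩ := hu
  obtain ⟨z, hz1, hz2⟩ := Finset.not_subset.1 hnov
  have huC2 : u ∉ C2 := fun hmem =>
    hz2 (nbhd_mono G (Finset.singleton_subset_iff.2 hmem) hz1)
  obtain ⟨c, hcC2, hadjuc⟩ := hadj.resolve_left (Finset.nonempty_iff_ne_empty.1 h2)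
  by_cases hA : nbhd G {u} ⊆ nbhd G C1
  · -- case B : respond with any legal move of C1
    obtain ⟨t, htL⟩ := ht
    obtain ⟨htnov, htadj⟩ := (mem_legal G).1 htL
    obtain ⟨zt, hzt1, hzt2⟩ := Finset.not_subset.1 htnov
    have htC1 : t ∉ C1 := fun hmem =>
      hzt2 (nbhd_mono G (Finset.singleton_subset_iff.2 hmem) hzt1)
    have htC2 : t ∉ C2 := fun hmem =>
      hzt2 (hN (nbhd_mono G (Finset.singleton_subset_iff.2 hmem) hzt1))
    have htu : t ≠ u := fun he => hzt2 (hA (he ▸ hzt1))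
    obtain ⟨c1, hc1, hadjtc1⟩ := htadj.resolve_left (Finset.nonempty_iff_ne_empty.1 h1)
    refine ⟨t, htL, insert_nonempty t C1, insert_nonempty u C2, ?_, ?_⟩
    · rw [nbhd_insert, nbhd_insert]
      intro y hy
      rcases mem_union.1 hy with hy | hy
      · exact mem_union_right _ (hA hy)
      · exact mem_union_right _ (hN hy)
    · have hnewX : ∀ y, y ∈ insert t C1 \ insert u C2 ↔
          (y = t ∨ (y ∈ C1 \ C2 ∧ y ≠ u)) := by
        intro y
        constructor
        · intro hy
          obtain ⟨hy1, hy2⟩ := mem_sdiff.1 hy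
          rcases mem_insert.1 hy1 with rfl | hy1
          · exact Or.inl rfl
          · exact Or.inr ⟨mem_sdiff.2 ⟨hy1, fun hc => hy2 (mem_insert_of_mem hc)⟩,
              fun he => hy2 (he ▸ mem_insert_self u C2)⟩
        · rintro (rfl | ⟨hy1, hy2⟩)
          · refine mem_sdiff.2 ⟨mem_insert_self _ _, fun hc => ?_⟩
            rcases mem_insert.1 hc with he | hc
            · exact htu he
            · exact htC2 hc
          · obtain ⟨hy3, hy4⟩ := mem_sdiff.1 hy1
            refine mem_sdiff.2 ⟨mem_insert_of_mem hy3, fun hc => ?_⟩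
            rcases mem_insert.1 hc with he | hc
            · exact hy2 he
            · exact hy4 hc
      intro X' hsubX hX'ne
      by_cases hsing : ∀ y ∈ X', y = t
      · obtain ⟨y0, hy0⟩ := hX'ne
        have htX' : t ∈ X' := (hsing y0 hy0) ▸ hy0
        refine ⟨t, htX', c1, ?_, hadjtc1⟩
        by_cases hc1C2 : c1 ∈ C2
        · exact mem_union_left _ (mem_insert_of_mem hc1C2)
        · by_cases hc1u : c1 = u
          · exact mem_union_left _ (hc1u ▸ mem_insert_self u C2)
          · refine mem_union_right _ (mem_sdiff.2
              ⟨(hnewX c1).2 (Or.inr ⟨mem_sdiff.2 ⟨hc1, hc1C2⟩, hc1u⟩), ?_⟩)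
            intro hcX'
            exact htC1 ((hsing c1 hcX') ▸ hc1)
      · push_neg at hsing
        obtain ⟨y0, hy0X, hy0t⟩ := hsing
        have hXsub : X'.erase t ⊆ C1 \ C2 := by
          intro y hy
          obtain ⟨hyt, hyX⟩ := mem_erase.1 hy
          rcases (hnewX y).1 (hsubX hyX) with h | h
          · exact absurd h hyt
          · exact h.1
        have hXne : (X'.erase t).Nonempty := ⟨y0, mem_erase.2 ⟨hy0t, hy0X⟩⟩
        obtain ⟨x0, hx0, c'', hc'', hadj''⟩ := hGc (X'.erase t) hXsub hXne
        refine ⟨x0, erase_subset _ _ hx0, c'', ?_, hadj''⟩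
        rcases mem_union.1 hc'' with h | h
        · exact mem_union_left _ (mem_insert_of_mem h)
        · obtain ⟨hcc1, hcc2⟩ := mem_sdiff.1 h
          by_cases hcu : c'' = u
          · exact mem_union_left _ (hcu ▸ mem_insert_self u C2)
          · refine mem_union_right _ (mem_sdiff.2 ⟨(hnewX c'').2 (Or.inr ⟨hcc1, hcu⟩), ?_⟩)
            intro hcX'
            have hct : c'' ≠ t := fun he => htC1 (he ▸ (mem_sdiff.1 hcc1).1)
            exact hcc2 (mem_erase.2 ⟨hct, hcX'⟩)
  · -- case A : mirror with u
    obtain ⟨z', hz'1, hz'2⟩ := Finset.not_subset.1 hA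
    have huC1 : u ∉ C1 := fun hmem =>
      hz'2 (nbhd_mono G (Finset.singleton_subset_iff.2 hmem) hz'1)
    have hadj1 : ∃ c1 ∈ C1, G.Adj u c1 := by
      by_cases hcC1 : c ∈ C1
      · exact ⟨c, hcC1, hadjuc⟩
      · have hun : u ∈ nbhd G C1 :=
          hN ((mem_nbhd G).2 (Or.inr ⟨c, hcC2, hadjuc⟩))
        exact adj_of_mem_nbhd G hun huC1
    have huL1 : u ∈ legalMoves G ∅ C1 :=
      (mem_legal G).2 ⟨fun hss => hz'2 (hss hz'1), Or.inr hadj1⟩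
    exact ⟨u, huL1, inv_mirror G ⟨h1, h2, hN, hGc⟩ huC1 huC2⟩

lemma step_top {C1 C2 : Finset V} (h : Inv G C1 C2)
    (hL1 : legalMoves G ∅ C1 = ∅) {u : V} (hu : u ∈ legalMoves G ∅ C2) :
    Inv G C1 (insert u C2) := by
  obtain ⟨h1, h2, hN, hGc⟩ := h
  rw [mem_legal] at hu
  obtain ⟨hnov, hadj⟩ := hu
  obtain ⟨z, hz1, hz2⟩ := Finset.not_subset.1 hnov
  have huC2 : u ∉ C2 := fun hmem =>
    hz2 (nbhd_mono G (Finset.singleton_subset_iff.2 hmem) hz1)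
  obtain ⟨c, hcC2, hadjuc⟩ := hadj.resolve_left (Finset.nonempty_iff_ne_empty.1 h2)
  have hA : nbhd G {u} ⊆ nbhd G C1 := by
    by_contra hA
    obtain ⟨z', hz'1, hz'2⟩ := Finset.not_subset.1 hA
    have huC1 : u ∉ C1 := fun hmem =>
      hz'2 (nbhd_mono G (Finset.singleton_subset_iff.2 hmem) hz'1)
    have hadj1 : ∃ c1 ∈ C1, G.Adj u c1 := by
      by_cases hcC1 : c ∈ C1
      · exact ⟨c, hcC1, hadjuc⟩
      · have hun : u ∈ nbhd G C1 :=
          hN ((mem_nbhd G).2 (Or.inr ⟨c, hcC2, hadjuc⟩))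
        exact adj_of_mem_nbhd G hun huC1
    have huL1 : u ∈ legalMoves G ∅ C1 :=
      (mem_legal G).2 ⟨fun hss => hz'2 (hss hz'1), Or.inr hadj1⟩
    rw [hL1] at huL1
    exact absurd huL1 (Finset.notMem_empty u)
  refine ⟨h1, insert_nonempty u C2, ?_, ?_⟩
  · rw [nbhd_insert]
    intro y hy
    rcases mem_union.1 hy with hy | hy
    · exact hA hy
    · exact hN hy
  · intro X' hsubX hX'ne
    have hsub2 : X' ⊆ C1 \ C2 := by
      intro y hy
      have := mem_sdiff.1 (hsubX hy)
      exact mem_sdiff.2 ⟨this.1, fun hyC2 => this.2 (mem_insert_of_mem hyC2)⟩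
    obtain ⟨x0, hx0, c', hc', hadj'⟩ := hGc X' hsub2 hX'ne
    refine ⟨x0, hx0, c', ?_, hadj'⟩
    rcases mem_union.1 hc' with h | h
    · exact mem_union_left _ (mem_insert_of_mem h)
    · obtain ⟨hcc1, hcc2⟩ := mem_sdiff.1 h
      by_cases hcu : c' = u
      · exact mem_union_left _ (hcu ▸ mem_insert_self u C2)
      · obtain ⟨hc1, hc2⟩ := mem_sdiff.1 hcc1
        refine mem_union_right _ (mem_sdiff.2 ⟨mem_sdiff.2 ⟨hc1, ?_⟩, hcc2⟩)
        simp [hc2, hcu]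

lemma dom_iff {C : Finset V} :
    univ ⊆ (∅ : Finset V) ∪ nbhd G C ↔ nbhd G C = univ := by
  rw [Finset.empty_union, Finset.univ_subset_iff]

lemma legal_empty_of_dom {C : Finset V} (hd : univ ⊆ (∅ : Finset V) ∪ nbhd G C) :
    legalMoves G ∅ C = ∅ := by
  rw [Finset.eq_empty_iff_forall_notMem]
  intro w hw
  obtain ⟨hnov, _⟩ := (mem_legal G).1 hw
  rw [Finset.empty_union] at hd
  exact hnov fun z _ => hd (mem_univ z)

lemma val_eq_zero_of_dom {C : Finset V} (hd : univ ⊆ (∅ : Finset V) ∪ nbhd G C)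
    (b : Bool) (n : ℕ) : val G ∅ b n C = 0 := by
  have hd' : nbhd G C = univ := (dom_iff G).1 hd
  cases n with
  | zero => simp [val, hd']
  | succ n =>
      have hle := legal_empty_of_dom G hd
      simp [val, hle, hd']

lemma ndom_trans {C1 C2 : Finset V} (hN : nbhd G C2 ⊆ nbhd G C1)
    (hd : ¬ univ ⊆ (∅ : Finset V) ∪ nbhd G C1) :
    ¬ univ ⊆ (∅ : Finset V) ∪ nbhd G C2 := by
  rw [Finset.empty_union] at hd ⊢
  intro hcon
  exact hd fun x hx => hN (hcon hx)

lemma val_top_of_stuck {C1 : Finset V}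
    (hd : ¬ univ ⊆ (∅ : Finset V) ∪ nbhd G C1)
    (hL : legalMoves G ∅ C1 = ∅) :
    ∀ (n : ℕ) (b : Bool) (C2 : Finset V), Inv G C1 C2 → val G ∅ b n C2 = ⊤ := by
  intro n
  induction n with
  | zero =>
      intro b C2 hI
      have h' : ¬ nbhd G C2 = univ := fun h => ndom_trans G hI.2.2.1 hd ((dom_iff G).2 h)
      simp [val, h']
  | succ n ih =>
      intro b C2 hI
      by_cases hL2 : (legalMoves G ∅ C2).Nonempty
      · have hall : ∀ b' : Bool, ∀ u ∈ legalMoves G ∅ C2,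
            val G ∅ b' n (insert u C2) = ⊤ :=
          fun b' u hu => ih b' _ (step_top G hI hL hu)
        cases b with
        | true =>
            have : val G ∅ true (n + 1) C2 =
                1 + (legalMoves G ∅ C2).inf' hL2
                  (fun v => val G ∅ false n (insert v C2)) := by
              simp [val, hL2]
            rw [this]
            have : (legalMoves G ∅ C2).inf' hL2
                (fun v => val G ∅ false n (insert v C2)) = ⊤ :=
              le_antisymm le_top (Finset.le_inf' hL2 _
                (fun u hu => (hall false u hu).ge))
            rw [this]
            simp
        | false =>
            have : val G ∅ false (n + 1) C2 =
                1 + (legalMoves G ∅ C2).sup' hL2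
                  (fun v => val G ∅ true n (insert v C2)) := by
              simp [val, hL2]
            rw [this]
            have hL2' := hL2
            obtain ⟨u0, hu0⟩ := hL2'
            have h0 : (⊤ : ℕ∞) ≤ (legalMoves G ∅ C2).sup' hL2
                (fun v => val G ∅ true n (insert v C2)) :=
              (hall true u0 hu0).ge.trans (Finset.le_sup' (fun v => val G ∅ true n (insert v C2)) hu0)
            rw [le_antisymm le_top h0]
            simp
      · have h' : ¬ nbhd G C2 = univ := fun h => ndom_trans G hI.2.2.1 hd ((dom_iff G).2 h)
        simp [val, hL2, h']

lemma val_le_of_inv :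
    ∀ (n : ℕ) (b : Bool) (C1 C2 : Finset V), Inv G C1 C2 →
      val G ∅ b n C1 ≤ val G ∅ b n C2 := by
  intro n
  induction n with
  | zero =>
      intro b C1 C2 hI
      by_cases h2 : univ ⊆ (∅ : Finset V) ∪ nbhd G C2
      · have h1 : univ ⊆ (∅ : Finset V) ∪ nbhd G C1 := by
          rw [Finset.empty_union] at h2 ⊢
          exact fun x hx => hI.2.2.1 (h2 hx)
        simp [val, (dom_iff G).1 h1, (dom_iff G).1 h2]
      · have h2' : ¬ nbhd G C2 = univ := fun h => h2 ((dom_iff G).2 h)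
        simp [val, h2']
  | succ n ih =>
      intro b C1 C2 hI
      by_cases hd1 : univ ⊆ (∅ : Finset V) ∪ nbhd G C1
      · rw [val_eq_zero_of_dom G hd1]
        exact zero_le
      · by_cases hL1 : (legalMoves G ∅ C1).Nonempty
        · by_cases hL2 : (legalMoves G ∅ C2).Nonempty
          · cases b with
            | true =>
                have e1 : val G ∅ true (n + 1) C1 =
                    1 + (legalMoves G ∅ C1).inf' hL1
                      (fun v => val G ∅ false n (insert v C1)) := by
                  simp [val, hL1]
                have e2 : val G ∅ true (n + 1) C2 =
                    1 + (legalMoves G ∅ C2).inf' hL2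
                      (fun v => val G ∅ false n (insert v C2)) := by
                  simp [val, hL2]
                rw [e1, e2]
                refine add_le_add_right ?_ 1
                refine Finset.le_inf' hL2 _ (fun u hu => ?_)
                obtain ⟨s, hsL, hsI⟩ := step_M1 G hI hu hL1
                exact le_trans (Finset.inf'_le _ hsL) (ih false _ _ hsI)
            | false =>
                have e1 : val G ∅ false (n + 1) C1 =
                    1 + (legalMoves G ∅ C1).sup' hL1
                      (fun v => val G ∅ true n (insert v C1)) := by
                  simp [val, hL1]
                have e2 : val G ∅ false (n + 1) C2 =
                    1 + (legalMoves G ∅ C2).sup' hL2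
                      (fun v => val G ∅ true n (insert v C2)) := by
                  simp [val, hL2]
                rw [e1, e2]
                refine add_le_add_right ?_ 1
                refine Finset.sup'_le hL1 _ (fun s hs => ?_)
                obtain ⟨u, huL, hI'⟩ := step_M2 G hI hs
                exact le_trans (ih true _ _ hI') (Finset.le_sup' (fun v => val G ∅ true n (insert v C2)) huL)
          · have hnd' : ¬ nbhd G C2 = univ :=
              fun h => ndom_trans G hI.2.2.1 hd1 ((dom_iff G).2 h)
            have : val G ∅ b (n + 1) C2 = ⊤ := by
              simp [val, hL2, hnd']
            rw [this]
            exact le_top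
        · rw [val_top_of_stuck G hd1 (Finset.not_nonempty_iff_eq_empty.1 hL1)
            (n + 1) b C2 hI]
          exact le_top

end ConnDomGame

open ConnDomGame in
/-- If `D` is the set of the first `k ≥ 0` moves of a connected domination game on `G`
and `v`, `v'` are legal next moves with
`N[v] ∩ (V(G)∖N[D]) ⊆ N[v'] ∩ (V(G)∖N[D])`, then for either player to move next, the
optimally continued game after playing `v'` is at most as long as after playing `v`. -/
theorem continuation_compare_moves {V : Type*} [Fintype V] [DecidableEq V]
    (G : SimpleGraph V) [DecidableRel G.Adj] (hG : G.Connected)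
    (k : ℕ) (l : List V) (hleg : LegalSeq G ∅ l) (hlen : l.length = k)
    (D : Finset V) (hD : l.toFinset = D)
    (v v' : V) (hv : v ∈ legalMoves G ∅ D) (hv' : v' ∈ legalMoves G ∅ D)
    (hsub : nbhd G {v} \ nbhd G D ⊆ nbhd G {v'} \ nbhd G D) (b : Bool) :
    val G ∅ b (Fintype.card V) (insert v' D) ≤
      val G ∅ b (Fintype.card V) (insert v D) := by
  classical
  by_cases hvv : v = v'
  · subst hvv; exact le_refl _
  · refine val_le_of_inv G _ b _ _ ?_
    obtain ⟨hvnov, hvadj⟩ := (mem_legal G).1 hv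
    obtain ⟨hv'nov, hv'adj⟩ := (mem_legal G).1 hv'
    obtain ⟨z, hz1, hz2⟩ := Finset.not_subset.1 hvnov
    obtain ⟨z', hz'1, hz'2⟩ := Finset.not_subset.1 hv'nov
    have hvD : v ∉ D := fun hm => hz2 (nbhd_mono G (Finset.singleton_subset_iff.2 hm) hz1)
    have hv'D : v' ∉ D := fun hm => hz'2 (nbhd_mono G (Finset.singleton_subset_iff.2 hm) hz'1)
    have hNsub : nbhd G (insert v D) ⊆ nbhd G (insert v' D) := by
      rw [nbhd_insert, nbhd_insert]
      intro x hx
      rcases mem_union.1 hx with hx | hx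
      · by_cases hxD : x ∈ nbhd G D
        · exact mem_union_right _ hxD
        · have hmem := hsub (mem_sdiff.2 ⟨hx, hxD⟩)
          exact mem_union_left _ (mem_sdiff.1 hmem).1
      · exact mem_union_right _ hx
    have hadj : ∃ c ∈ insert v D, G.Adj v' c := by
      rcases hv'adj with hD | ⟨u, huD, hadjr⟩
      · subst hD
        have hvmem : v ∈ nbhd G {v} := (mem_nbhd_singleton G).2 (Or.inl rfl)
        have hvnD : v ∉ nbhd G (∅ : Finset V) := by
          rw [mem_nbhd]; simp
        have hmem := hsub (mem_sdiff.2 ⟨hvmem, hvnD⟩)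
        rcases (mem_nbhd_singleton G).1 (mem_sdiff.1 hmem).1 with he | ha
        · exact absurd he hvv
        · exact ⟨v, mem_insert_self v _, ha.symm⟩
      · exact ⟨u, mem_insert_of_mem huD, hadjr⟩
    refine ⟨insert_nonempty _ _, insert_nonempty _ _, hNsub, ?_⟩
    have hXeq : insert v' D \ insert v D = {v'} := by
      ext y
      constructor
      · intro hy
        obtain ⟨hy1, hy2⟩ := mem_sdiff.1 hy
        rcases mem_insert.1 hy1 with rfl | hy1
        · exact mem_singleton_self _
        · exact absurd (mem_insert_of_mem hy1) hy2
      · intro hy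
        rw [mem_singleton] at hy; subst hy
        refine mem_sdiff.2 ⟨mem_insert_self _ _, fun hc => ?_⟩
        rcases mem_insert.1 hc with he | hc
        · exact hvv he.symm
        · exact hv'D hc
    intro X' hsubX hX'ne
    rw [hXeq] at hsubX
    obtain ⟨y0, hy0⟩ := hX'ne
    have hy0v' : y0 = v' := mem_singleton.1 (hsubX hy0)
    subst hy0v'
    obtain ⟨c, hc, hadjc⟩ := hadj
    exact ⟨y0, hy0, c, mem_union_left _ hc, hadjc⟩
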